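/- arXiv:1308.3934 — 2 statements merged into one kernel-verified Lean document; each statement's English description precedes it below -/
import Mathlib

section
/- There is an absolute constant C > 0 such that for all real V ≥ 1, T ≥ 1 and τ ∈ [0,1], one has ∫_V^{V(1+τ)} |Σ_{|γ| ≤ T} u^{iγ}|² du ≤ C·V·τ·F(V,T,τ). -/
open scoped BigOperators

noncomputable section

attribute [local instance] Classical.propDecidable

/-- The multiplicity (analytic order) of `riemannZeta` at `ρ`, as a natural number. -/
def zetaOrder (ρ : ℂ) : ℕ :=
  if h : AnalyticAt ℂ riemannZeta ρ then (analyticOrderAt riemannZeta ρ).toNat else 0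

/-- `ρ` is a nontrivial zero of the Riemann zeta function. -/
def IsNontrivialZero (ρ : ℂ) : Prop :=
  riemannZeta ρ = 0 ∧ 0 < ρ.re ∧ ρ.re < 1

/-- Weight of `ρ`: its multiplicity if it is a nontrivial zero with `|Im ρ| ≤ T`, else `0`. -/
def zw (T : ℝ) (ρ : ℂ) : ℕ :=
  if IsNontrivialZero ρ ∧ |ρ.im| ≤ T then zetaOrder ρ else 0

/-- Weight of `ρ`: its multiplicity if it is a nontrivial zero with `U < |Im ρ| ≤ T`, else `0`. -/
def zwU (U T : ℝ) (ρ : ℂ) : ℕ :=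
  if IsNontrivialZero ρ ∧ U < |ρ.im| ∧ |ρ.im| ≤ T then zetaOrder ρ else 0

/-- The extended pair-correlation function
`F(X,T,τ) = 4 Σ_{-T ≤ γ,γ' ≤ T} X^{i(γ-γ')}/(4+τ²(γ-γ')²)`,
the (real-valued) sum being over ordered pairs of imaginary parts of nontrivial zeta
zeros in `[-T,T]`, counted with multiplicity. -/
def Fpc (X T τ : ℝ) : ℝ :=
  4 * ∑ᶠ ρ : ℂ, ∑ᶠ ρ' : ℂ, (zw T ρ : ℝ) * (zw T ρ') *
    (((X : ℂ) ^ (Complex.I * ((ρ.im - ρ'.im : ℝ) : ℂ))).re /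
      (4 + τ ^ 2 * (ρ.im - ρ'.im) ^ 2))

/-- `Σ(X,T) = Σ_{|γ| ≤ T} X^{iγ}` over imaginary parts of nontrivial zeta zeros,
counted with multiplicity. -/
def SigmaXT (X T : ℝ) : ℂ :=
  ∑ᶠ ρ : ℂ, (zw T ρ : ℂ) * (X : ℂ) ^ (Complex.I * (ρ.im : ℂ))

/-- `Σ(X,U,T) = Σ_{U < |γ| ≤ T} X^{iγ}`. -/
def SigmaUT (X U T : ℝ) : ℂ :=
  ∑ᶠ ρ : ℂ, (zwU U T ρ : ℂ) * (X : ℂ) ^ (Complex.I * (ρ.im : ℂ))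

/-- `Σ(X,T;v) = Σ_{|γ| ≤ T} X^{iγ} e^{iγv}`. -/
def SigmaV (X T v : ℝ) : ℂ :=
  ∑ᶠ ρ : ℂ, (zw T ρ : ℂ) * (X : ℂ) ^ (Complex.I * (ρ.im : ℂ)) *
    Complex.exp (Complex.I * (ρ.im : ℝ) * (v : ℂ))

/-- The Chebyshev function `ψ(x) = Σ_{n ≤ x} Λ(n)`. -/
def psi (x : ℝ) : ℝ :=
  ∑ n ∈ Finset.Iic ⌊x⌋₊, ArithmeticFunction.vonMangoldt n

/-- `J(X,Y,h) = ∫_X^{X+Y} (ψ(x+h) - ψ(x) - h)² dx`. -/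
def Jpc (X Y h : ℝ) : ℝ :=
  ∫ x in X..(X + Y), (psi (x + h) - psi x - h) ^ 2

/-- The Riemann Hypothesis: every nontrivial zero of zeta has real part `1/2`. -/
def RH : Prop :=
  ∀ ρ : ℂ, IsNontrivialZero ρ → ρ.re = 1 / 2

/-- Hypothesis `H(η)` for fixed `0 < η < 1`: RH holds, and for every `ε > 0`
there is `C > 0` such that `F(X,T,τ) ≤ C T X^ε` for all sufficiently large `X`,
uniformly for `X^η ≤ T ≤ X` and `X^η/T ≤ τ ≤ 1`. -/
def HypH (η : ℝ) : Prop :=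
  RH ∧ ∀ ε : ℝ, 0 < ε → ∃ C : ℝ, 0 < C ∧ ∃ X₀ : ℝ, ∀ X : ℝ, X₀ ≤ X →
    ∀ T : ℝ, X ^ η ≤ T → T ≤ X → ∀ τ : ℝ, X ^ η / T ≤ τ → τ ≤ 1 →
      Fpc X T τ ≤ C * T * X ^ ε

/-- Hypothesis `H(0)`: RH holds, and for every `ε > 0` there is `C > 0` such that
`F(X,T,τ) ≤ C T X^ε` for all sufficiently large `X`, uniformly for
`X^ε ≤ T ≤ X` and `0 ≤ τ ≤ 1`. -/
def HypH0 : Prop :=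
  RH ∧ ∀ ε : ℝ, 0 < ε → ∃ C : ℝ, 0 < C ∧ ∃ X₀ : ℝ, ∀ X : ℝ, X₀ ≤ X →
    ∀ T : ℝ, X ^ ε ≤ T → T ≤ X → ∀ τ : ℝ, 0 ≤ τ → τ ≤ 1 →
      Fpc X T τ ≤ C * T * X ^ ε

/-!
Substituting `u = V e^v` turns the integral into `V ∫_0^{log (1+τ)} e^v |g(log V + v)|² dv`, where
`g(t) = Σ_{|γ| ≤ T} e^{iγt}` is a finite sum since zeta has only finitely many zeros in a compact
set. On this range `e^v ≤ e³ e^{-2|v|/τ}`, and the integral of `|g(log V + v)|²` against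
`e^{-2|v|/τ}` over the whole line can be computed term by term: the Fourier transform of
`e^{-b|v|}` is `2b / (b² + δ²)`, which for `b = 2/τ` equals `τ · 4 / (4 + τ²δ²)`, so the result is
exactly `τ F(V,T,τ)`.
-/

open Real MeasureTheory Set
open Complex (I)
open scoped Complex

theorem exp_neg_mul_abs_mul_cexp_of_nonpos (b δ : ℝ) {v : ℝ} (hv : v ≤ 0) :
    (rexp (-b * |v|) : ℂ) * cexp (δ * v * I) = cexp ((b + δ * I) * v) := by
  rw [abs_of_nonpos hv, Complex.ofReal_exp, ← Complex.exp_add]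
  push_cast
  ring_nf

theorem exp_neg_mul_abs_mul_cexp_of_nonneg (b δ : ℝ) {v : ℝ} (hv : 0 ≤ v) :
    (rexp (-b * |v|) : ℂ) * cexp (δ * v * I) = cexp ((-b + δ * I) * v) := by
  rw [abs_of_nonneg hv, Complex.ofReal_exp, ← Complex.exp_add]
  push_cast
  ring_nf

theorem integrable_exp_neg_mul_abs_mul_cexp {b : ℝ} (hb : 0 < b) (δ : ℝ) :
    Integrable fun v : ℝ => (rexp (-b * |v|) : ℂ) * cexp (δ * v * I) := by
  have hIic := (integrableOn_exp_mul_complex_Iic (a := b + δ * I) (by simpa) 0).congr_fun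
    (fun v hv => (exp_neg_mul_abs_mul_cexp_of_nonpos b δ hv).symm) measurableSet_Iic
  have hIoi := (integrableOn_exp_mul_complex_Ioi (a := -b + δ * I) (by simpa) 0).congr_fun
    (fun v hv => (exp_neg_mul_abs_mul_cexp_of_nonneg b δ hv.le).symm) measurableSet_Ioi
  simpa using hIic.union hIoi

theorem integral_exp_neg_mul_abs_mul_cexp {b : ℝ} (hb : 0 < b) (δ : ℝ) :
    ∫ v : ℝ, (rexp (-b * |v|) : ℂ) * cexp (δ * v * I) = (2 * b / (b ^ 2 + δ ^ 2) : ℝ) := by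
  have hint := integrable_exp_neg_mul_abs_mul_cexp hb δ
  rw [← intervalIntegral.integral_Iic_add_Ioi hint.integrableOn hint.integrableOn,
    setIntegral_congr_fun measurableSet_Iic fun v hv =>
      exp_neg_mul_abs_mul_cexp_of_nonpos b δ hv,
    setIntegral_congr_fun measurableSet_Ioi fun v hv =>
      exp_neg_mul_abs_mul_cexp_of_nonneg b δ hv.le,
    integral_exp_mul_complex_Iic (by simpa), integral_exp_mul_complex_Ioi (by simpa)]
  have h₁ : (b : ℂ) + δ * I ≠ 0 := fun h => by simpa [hb.ne'] using congrArg Complex.re h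
  have h₂ : -(b : ℂ) + δ * I ≠ 0 := fun h => by simpa [hb.ne'] using congrArg Complex.re h
  have h₃ : (b : ℂ) ^ 2 + δ ^ 2 ≠ 0 := by exact_mod_cast (by positivity : b ^ 2 + δ ^ 2 ≠ 0)
  simp only [Complex.ofReal_zero, mul_zero, Complex.exp_zero]
  push_cast
  field_simp
  linear_combination (-2 * b * δ ^ 2 : ℂ) * Complex.I_sq

theorem exp_neg_mul_abs_mul_cos_add_eq_re (b δ a v : ℝ) :
    rexp (-b * |v|) * cos (δ * (a + v))
      = (cexp (δ * a * I) * ((rexp (-b * |v|) : ℂ) * cexp (δ * v * I))).re := by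
  rw [mul_left_comm, ← Complex.exp_add, Complex.re_ofReal_mul, ← Complex.exp_ofReal_mul_I_re]
  push_cast
  ring_nf

theorem integrable_exp_neg_mul_abs_mul_cos_add {b : ℝ} (hb : 0 < b) (δ a : ℝ) :
    Integrable fun v : ℝ => rexp (-b * |v|) * cos (δ * (a + v)) := by
  simpa only [exp_neg_mul_abs_mul_cos_add_eq_re, RCLike.re_to_complex] using
    ((integrable_exp_neg_mul_abs_mul_cexp hb δ).const_mul (cexp (δ * a * I))).re

theorem integral_exp_neg_mul_abs_mul_cos_add {b : ℝ} (hb : 0 < b) (δ a : ℝ) :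
    ∫ v : ℝ, rexp (-b * |v|) * cos (δ * (a + v)) = cos (δ * a) * (2 * b / (b ^ 2 + δ ^ 2)) := by
  have hre := integral_re ((integrable_exp_neg_mul_abs_mul_cexp hb δ).const_mul (cexp (δ * a * I)))
  simp only [RCLike.re_to_complex] at hre
  simp only [exp_neg_mul_abs_mul_cos_add_eq_re]
  rw [hre, integral_const_mul,
    integral_exp_neg_mul_abs_mul_cexp hb, mul_comm, Complex.re_ofReal_mul, ← Complex.ofReal_mul,
    Complex.exp_ofReal_mul_I_re, mul_comm]

theorem norm_sum_mul_cexp_sq {ι : Type*} (s : Finset ι) (w γ : ι → ℝ) (t : ℝ) :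
    ‖∑ i ∈ s, (w i : ℂ) * cexp (γ i * t * I)‖ ^ 2
      = ∑ i ∈ s, ∑ j ∈ s, w i * w j * cos ((γ i - γ j) * t) := by
  have hterm : ∀ i j,
      (w i : ℂ) * cexp (γ i * t * I) * (starRingEnd ℂ) ((w j : ℂ) * cexp (γ j * t * I))
        = (w i * w j : ℝ) * cexp (((γ i - γ j) * t : ℝ) * I) := by
    intro i j
    simp only [map_mul, Complex.conj_ofReal, ← Complex.exp_conj, Complex.conj_I]
    rw [mul_mul_mul_comm, ← Complex.exp_add]
    push_cast
    ring_nf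
  rw [Complex.sq_norm, ← Complex.ofReal_re (Complex.normSq _), ← Complex.mul_conj, map_sum,
    Finset.sum_mul_sum, Complex.re_sum]
  simp only [hterm, Complex.re_sum, Complex.re_ofReal_mul, Complex.exp_ofReal_mul_I_re]

section TrigonometricPolynomial

variable {ι : Type*} (s : Finset ι) (w γ : ι → ℝ) {b : ℝ} (a : ℝ)

theorem exp_neg_mul_abs_mul_norm_sum_sq_eq (v : ℝ) :
    rexp (-b * |v|) * ‖∑ i ∈ s, (w i : ℂ) * cexp (γ i * (a + v : ℝ) * I)‖ ^ 2
      = ∑ i ∈ s, ∑ j ∈ s, w i * w j * (rexp (-b * |v|) * cos ((γ i - γ j) * (a + v))) := by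
  rw [norm_sum_mul_cexp_sq, Finset.mul_sum]
  refine Finset.sum_congr rfl fun i _ => ?_
  rw [Finset.mul_sum]
  exact Finset.sum_congr rfl fun j _ => by ring

theorem integrable_exp_neg_mul_abs_mul_norm_sum_sq (hb : 0 < b) :
    Integrable fun v : ℝ =>
      rexp (-b * |v|) * ‖∑ i ∈ s, (w i : ℂ) * cexp (γ i * (a + v : ℝ) * I)‖ ^ 2 := by
  simp only [exp_neg_mul_abs_mul_norm_sum_sq_eq]
  exact integrable_finsetSum _ fun i _ => integrable_finsetSum _ fun j _ =>
    (integrable_exp_neg_mul_abs_mul_cos_add hb _ a).const_mul _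

theorem integral_exp_neg_mul_abs_mul_norm_sum_sq (hb : 0 < b) :
    ∫ v : ℝ, rexp (-b * |v|) * ‖∑ i ∈ s, (w i : ℂ) * cexp (γ i * (a + v : ℝ) * I)‖ ^ 2
      = ∑ i ∈ s, ∑ j ∈ s, w i * w j *
          (cos ((γ i - γ j) * a) * (2 * b / (b ^ 2 + (γ i - γ j) ^ 2))) := by
  simp only [exp_neg_mul_abs_mul_norm_sum_sq_eq]
  rw [integral_finsetSum _ fun i _ => integrable_finsetSum _ fun j _ =>
    (integrable_exp_neg_mul_abs_mul_cos_add hb _ a).const_mul _]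
  refine Finset.sum_congr rfl fun i _ => ?_
  rw [integral_finsetSum _ fun j _ => (integrable_exp_neg_mul_abs_mul_cos_add hb _ a).const_mul _]
  simp only [integral_const_mul, integral_exp_neg_mul_abs_mul_cos_add hb]

end TrigonometricPolynomial

theorem integral_eq_integral_mul_exp_smul_comp {E : Type*} [NormedAddCommGroup E] [NormedSpace ℝ E]
    (g : ℝ → E) {V c : ℝ} (hV : 0 ≤ V) (hc : 0 < c) :
    ∫ u in V..V * c, g u = ∫ v in 0..log c, (V * rexp v) • g (V * rexp v) := by
  have := intervalIntegral.integral_deriv_smul_comp_of_deriv_nonneg (g := g) (a := 0) (b := log c)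
    (f := fun v => V * rexp v) (f' := fun v => V * rexp v) (by fun_prop)
    (fun v _ => (hasDerivAt_exp v).const_mul V) (fun v _ => by positivity)
  simpa [exp_log hc] using this.symm

theorem exp_le_exp_three_mul_exp_neg_mul_abs {τ v : ℝ} (hτ : 0 < τ) (hτ1 : τ ≤ 1) (hv : 0 ≤ v)
    (hvτ : v ≤ τ) : rexp v ≤ rexp 3 * rexp (-(2 / τ) * |v|) := by
  rw [← exp_add, exp_le_exp, abs_of_nonneg hv]
  have : 2 / τ * v ≤ 2 := by rw [div_mul_eq_mul_div, div_le_iff₀ hτ]; linarith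
  linarith

theorem integral_exp_mul_le_exp_three_mul_integral {τ : ℝ} (hτ : 0 < τ) (hτ1 : τ ≤ 1) {h : ℝ → ℝ}
    (hh : Continuous h) (hh0 : ∀ v, 0 ≤ h v)
    (hint : Integrable fun v => rexp (-(2 / τ) * |v|) * h v) :
    ∫ v in 0..log (1 + τ), rexp v * h v ≤ rexp 3 * ∫ v, rexp (-(2 / τ) * |v|) * h v := by
  have hL : 0 ≤ log (1 + τ) := log_nonneg (by linarith)
  have hLτ : log (1 + τ) ≤ τ := by linarith [log_le_sub_one_of_pos (by linarith : 0 < 1 + τ)]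
  rw [← MeasureTheory.integral_const_mul]
  calc ∫ v in 0..log (1 + τ), rexp v * h v
      ≤ ∫ v in 0..log (1 + τ), rexp 3 * (rexp (-(2 / τ) * |v|) * h v) := by
        refine intervalIntegral.integral_mono_on hL
          ((by fun_prop : Continuous _).intervalIntegrable _ _)
          ((by fun_prop : Continuous _).intervalIntegrable _ _) fun v hv => ?_
        rw [← mul_assoc]
        exact mul_le_mul_of_nonneg_right
          (exp_le_exp_three_mul_exp_neg_mul_abs hτ hτ1 hv.1 (hv.2.trans hLτ)) (hh0 v)
    _ ≤ ∫ v, rexp 3 * (rexp (-(2 / τ) * |v|) * h v) := by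
        rw [intervalIntegral.integral_of_le hL]
        exact setIntegral_le_integral (hint.const_mul _) (.of_forall fun v => by
          have := hh0 v; positivity)

theorem finite_support_zw (T : ℝ) : (Function.support (zw T)).Finite := by
  refine (isCompact_closedBall (0 : ℂ) (1 + |T|)).inter_riemannZetaZeros_finite.subset
    fun ρ hρ => ?_
  have hzero : IsNontrivialZero ρ ∧ |ρ.im| ≤ T := by
    by_contra h
    exact hρ (if_neg h)
  obtain ⟨⟨hζ, hre₀, hre₁⟩, him⟩ := hzero
  refine ⟨mem_closedBall_zero_iff.2 ?_, hζ⟩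
  calc ‖ρ‖ ≤ |ρ.re| + |ρ.im| := Complex.norm_le_abs_re_add_abs_im ρ
    _ ≤ 1 + |T| := add_le_add (abs_le.2 ⟨by linarith, hre₁.le⟩) (him.trans (le_abs_self T))

theorem ofReal_cpow_I_mul {x : ℝ} (hx : 0 < x) (c : ℝ) :
    (x : ℂ) ^ (I * c) = cexp (c * log x * I) := by
  rw [Complex.cpow_def_of_ne_zero (by exact_mod_cast hx.ne'), ← Complex.ofReal_log hx.le]
  ring_nf

theorem finsum_eq_sum_of_zw_eq_zero {M : Type*} [AddCommMonoid M] (T : ℝ) {f : ℂ → M}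
    (hf : ∀ ρ, zw T ρ = 0 → f ρ = 0) : ∑ᶠ ρ, f ρ = ∑ ρ ∈ (finite_support_zw T).toFinset, f ρ :=
  finsum_eq_sum_of_support_subset f fun ρ hρ => by simpa using mt (hf ρ) hρ

theorem SigmaXT_eq_sum {u : ℝ} (hu : 0 < u) (T : ℝ) :
    SigmaXT u T = ∑ ρ ∈ (finite_support_zw T).toFinset, (zw T ρ : ℝ) * cexp (ρ.im * log u * I) := by
  rw [SigmaXT, finsum_eq_sum_of_zw_eq_zero T fun ρ h => by simp [h]]
  simp [ofReal_cpow_I_mul hu]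

theorem Fpc_eq_sum {V : ℝ} (hV : 0 < V) (T τ : ℝ) :
    Fpc V T τ = 4 * ∑ ρ ∈ (finite_support_zw T).toFinset, ∑ ρ' ∈ (finite_support_zw T).toFinset,
      (zw T ρ : ℝ) * zw T ρ' *
        (cos ((ρ.im - ρ'.im) * log V) / (4 + τ ^ 2 * (ρ.im - ρ'.im) ^ 2)) := by
  rw [Fpc, finsum_eq_sum_of_zw_eq_zero T fun ρ h => by simp [h]]
  refine congrArg _ (Finset.sum_congr rfl fun ρ _ => ?_)
  rw [finsum_eq_sum_of_zw_eq_zero T fun ρ' h => by simp [h]]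
  simp only [ofReal_cpow_I_mul hV, ← Complex.ofReal_mul, Complex.exp_ofReal_mul_I_re]

/-- Lemma 3: For `V, T ≥ 1` and `τ ∈ [0,1]`,
`∫_V^{V(1+τ)} |Σ_{|γ| ≤ T} u^{iγ}|² du ≤ C V τ F(V,T,τ)`. -/
theorem integral_SigmaXT_sq_bound :
    ∃ C : ℝ, 0 < C ∧ ∀ V T τ : ℝ, 1 ≤ V → 1 ≤ T → 0 ≤ τ → τ ≤ 1 →
      (∫ u in V..(V * (1 + τ)), ‖SigmaXT u T‖ ^ 2) ≤ C * V * τ * Fpc V T τ := by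
  refine ⟨rexp 3, exp_pos 3, fun V T τ hV _ hτ0 hτ1 => ?_⟩
  rcases hτ0.eq_or_lt with rfl | hτ
  · simp
  have hV0 : 0 < V := by linarith
  set s := (finite_support_zw T).toFinset
  have hSigma : ∀ v, ‖SigmaXT (V * rexp v) T‖ ^ 2
      = ‖∑ ρ ∈ s, (zw T ρ : ℝ) * cexp (ρ.im * (log V + v : ℝ) * I)‖ ^ 2 := fun v => by
    rw [SigmaXT_eq_sum (by positivity), log_mul hV0.ne' (exp_ne_zero v), log_exp]
  have hK : ∀ δ : ℝ, 2 * (2 / τ) / ((2 / τ) ^ 2 + δ ^ 2) = τ * (4 / (4 + τ ^ 2 * δ ^ 2)) :=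
    fun δ => by field_simp; ring
  calc ∫ u in V..V * (1 + τ), ‖SigmaXT u T‖ ^ 2
      = V * ∫ v in 0..log (1 + τ),
          rexp v * ‖∑ ρ ∈ s, (zw T ρ : ℝ) * cexp (ρ.im * (log V + v : ℝ) * I)‖ ^ 2 := by
        rw [integral_eq_integral_mul_exp_smul_comp _ hV0.le (by linarith),
          ← intervalIntegral.integral_const_mul]
        simp only [smul_eq_mul, hSigma, mul_assoc]
    _ ≤ V * (rexp 3 * ∫ v, rexp (-(2 / τ) * |v|) *
          ‖∑ ρ ∈ s, (zw T ρ : ℝ) * cexp (ρ.im * (log V + v : ℝ) * I)‖ ^ 2) :=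
        mul_le_mul_of_nonneg_left (integral_exp_mul_le_exp_three_mul_integral hτ hτ1
          (by fun_prop) (fun _ => by positivity)
          (integrable_exp_neg_mul_abs_mul_norm_sum_sq _ _ _ _ (by positivity))) hV0.le
    _ = rexp 3 * V * τ * Fpc V T τ := by
        rw [integral_exp_neg_mul_abs_mul_norm_sum_sq _ _ _ _ (by positivity), Fpc_eq_sum hV0]
        simp only [hK, Finset.mul_sum]
        exact Finset.sum_congr rfl fun _ _ => Finset.sum_congr rfl fun _ _ => by ring

end
end

section
/- For all sufficiently large X the following holds: let 0 ≤ Y ≤ X, 1 ≤ h ≤ X, and let K be a real number with log²X ≤ K ≤ h. If there exists x₀ ∈ [X, X+Y] with |ψ(x₀+h) − ψ(x₀) − h| ≥ 5K, then every x ∈ [X, X+Y] with |x − x₀| ≤ K/log X satisfies |ψ(x+h) − ψ(x) − h| ≥ K. -/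
open scoped BigOperators

noncomputable section

attribute [local instance] Classical.propDecidable

/-!
Since `Λ(n) ≤ log n`, `ψ` grows by at most `(b - a + 1) log M` on any interval `[a, b] ⊆ (-∞, M]`.
Moving from `x₀` to `x` therefore changes `ψ(x + h) - ψ(x)` by at most
`2 (K / log X + 1) log (3X)`, which is `≤ 4K` as soon as `log X ≥ 4` and `K ≥ log² X`.
-/

open Real
open scoped Chebyshev

theorem psi_eq_chebyshev_psi : psi = Chebyshev.psi := by
  funext x
  rw [Chebyshev.psi_eq_sum_Icc, psi]
  rfl

theorem Nat.cast_floor_sub_floor_le {R : Type*} [Field R] [LinearOrder R] [IsStrictOrderedRing R]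
    [FloorSemiring R] {a b : R} (hab : a ≤ b) : ((⌊b⌋₊ - ⌊a⌋₊ : ℕ) : R) ≤ b - a + 1 := by
  rcases lt_or_ge b 0 with hb | hb
  · rw [Nat.floor_of_nonpos hb.le, Nat.zero_sub, Nat.cast_zero]
    linarith
  · rw [Nat.cast_sub (Nat.floor_le_floor hab)]
    linarith [Nat.floor_le hb, Nat.sub_one_lt_floor a]

theorem ArithmeticFunction.vonMangoldt_le_log_of_le {n : ℕ} {M : ℝ} (hnM : n ≤ M) (hM : 1 ≤ M) :
    vonMangoldt n ≤ Real.log M := by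
  rcases n.eq_zero_or_pos with rfl | hn
  · simpa using Real.log_nonneg hM
  · exact vonMangoldt_le_log.trans (Real.log_le_log (by exact_mod_cast hn) hnM)

namespace Chebyshev

theorem psi_sub_psi_eq_sum_Ioc {a b : ℝ} (hab : a ≤ b) :
    ψ b - ψ a = ∑ n ∈ Finset.Ioc ⌊a⌋₊ ⌊b⌋₊, ArithmeticFunction.vonMangoldt n := by
  rw [Chebyshev.psi, Chebyshev.psi, sub_eq_iff_eq_add',
    Finset.sum_Ioc_consecutive _ (Nat.zero_le _) (Nat.floor_le_floor hab)]

theorem psi_sub_psi_le {a b M : ℝ} (hab : a ≤ b) (hbM : b ≤ M) (hM : 1 ≤ M) :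
    ψ b - ψ a ≤ (b - a + 1) * log M := by
  have hΛ : ∀ n ∈ Finset.Ioc ⌊a⌋₊ ⌊b⌋₊, ArithmeticFunction.vonMangoldt n ≤ log M := by
    intro n hn
    obtain ⟨hn0, hnb⟩ := Finset.mem_Ioc.1 hn
    have hnb' : (n : ℝ) ≤ b := (Nat.le_floor_iff' (by omega)).1 hnb
    exact ArithmeticFunction.vonMangoldt_le_log_of_le (hnb'.trans hbM) hM
  calc ψ b - ψ a = ∑ n ∈ Finset.Ioc ⌊a⌋₊ ⌊b⌋₊, ArithmeticFunction.vonMangoldt n :=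
        psi_sub_psi_eq_sum_Ioc hab
    _ ≤ (Finset.Ioc ⌊a⌋₊ ⌊b⌋₊).card * log M := by
        simpa using Finset.sum_le_card_nsmul _ _ _ hΛ
    _ ≤ (b - a + 1) * log M := by
        rw [Nat.card_Ioc]
        exact mul_le_mul_of_nonneg_right (Nat.cast_floor_sub_floor_le hab) (log_nonneg hM)

theorem abs_psi_sub_psi_le {a b M : ℝ} (ha : a ≤ M) (hb : b ≤ M) (hM : 1 ≤ M) :
    |ψ a - ψ b| ≤ (|a - b| + 1) * log M := by
  wlog hab : a ≤ b generalizing a b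
  · rw [abs_sub_comm, abs_sub_comm a]
    exact this hb ha (le_of_not_ge hab)
  rw [abs_sub_comm, abs_of_nonneg (sub_nonneg.2 (psi_mono hab)), abs_sub_comm,
    abs_of_nonneg (sub_nonneg.2 hab)]
  exact psi_sub_psi_le hab hb hM

theorem abs_psi_increment_sub_le {x y h M : ℝ} (hh : 0 ≤ h) (hx : x + h ≤ M)
    (hy : y + h ≤ M) (hM : 1 ≤ M) :
    |(ψ (x + h) - ψ x - h) - (ψ (y + h) - ψ y - h)| ≤ 2 * (|x - y| + 1) * log M := by
  have hshift := abs_psi_sub_psi_le hx hy hM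
  rw [add_sub_add_right_eq_sub] at hshift
  calc |(ψ (x + h) - ψ x - h) - (ψ (y + h) - ψ y - h)|
      = |(ψ (x + h) - ψ (y + h)) - (ψ x - ψ y)| := by congr 1; ring
    _ ≤ |ψ (x + h) - ψ (y + h)| + |ψ x - ψ y| := abs_sub _ _
    _ ≤ 2 * (|x - y| + 1) * log M := by
        linarith [abs_psi_sub_psi_le (a := x) (b := y) (by linarith) (by linarith) hM]

end Chebyshev

theorem div_log_add_one_mul_log_three_mul_le {X K : ℝ} (hX : exp 4 ≤ X)
    (hK : log X ^ 2 ≤ K) : (K / log X + 1) * log (3 * X) ≤ 2 * K := by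
  have hX0 : 0 < X := (exp_pos 4).trans_le hX
  have hL : 4 ≤ log X := (le_log_iff_exp_le hX0).2 hX
  have hlog3 : log 3 ≤ 2 := by linarith [log_le_sub_one_of_pos (by norm_num : (0 : ℝ) < 3)]
  have hlog3X : log (3 * X) ≤ 3 / 2 * log X := by
    rw [log_mul (by norm_num) hX0.ne']
    linarith
  have hKL : K / log X * log X = K := div_mul_cancel₀ _ (by linarith)
  calc (K / log X + 1) * log (3 * X) ≤ (K / log X + 1) * (3 / 2 * log X) := by
        gcongr
        exact add_nonneg (div_nonneg (by nlinarith) (by linarith)) zero_le_one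
    _ = 3 / 2 * (K / log X * log X) + 3 / 2 * log X := by ring
    _ ≤ 2 * K := by rw [hKL]; nlinarith

/-- inertia of `ψ`: if `|ψ(x₀+h) - ψ(x₀) - h| ≥ 5K` for some
`x₀ ∈ [X, X+Y]`, then `|ψ(x+h) - ψ(x) - h| ≥ K` for every `x ∈ [X, X+Y]` with
`|x - x₀| ≤ K / log X`. -/
theorem psi_inertia :
    ∃ X₀ : ℝ, ∀ X : ℝ, X₀ ≤ X → ∀ Y h K : ℝ,
      0 ≤ Y → Y ≤ X → 1 ≤ h → h ≤ X → (Real.log X) ^ 2 ≤ K → K ≤ h →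
      ∀ x₀ ∈ Set.Icc X (X + Y), 5 * K ≤ |psi (x₀ + h) - psi x₀ - h| →
      ∀ x ∈ Set.Icc X (X + Y), |x - x₀| ≤ K / Real.log X →
        K ≤ |psi (x + h) - psi x - h| := by
  refine ⟨exp 4, ?_⟩
  rintro X hX Y h K - hYX hh hhX hK - x₀ ⟨hx₀X, hx₀Y⟩ h5K x ⟨hxX, hxY⟩ hxx₀
  rw [psi_eq_chebyshev_psi] at h5K ⊢
  have hX1 : 1 ≤ X := (one_le_exp (by norm_num)).trans hX
  have hvar := Chebyshev.abs_psi_increment_sub_le (x := x) (y := x₀) (h := h) (M := 3 * X)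
    (by linarith) (by linarith) (by linarith) (by linarith)
  have hbound : 2 * (|x - x₀| + 1) * log (3 * X) ≤ 4 * K := by
    have := div_log_add_one_mul_log_three_mul_le hX hK
    have : 2 * (|x - x₀| + 1) * log (3 * X) ≤ 2 * (K / log X + 1) * log (3 * X) := by
      gcongr
      exact log_nonneg (by linarith)
    linarith
  linarith [abs_sub_abs_le_abs_sub (ψ (x₀ + h) - ψ x₀ - h) (ψ (x + h) - ψ x - h),
    abs_sub_comm (ψ (x₀ + h) - ψ x₀ - h) (ψ (x + h) - ψ x - h)]

end
end
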